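/- Let k ≥ 2, let w ∈ {right, down}^{k−1} be the step word of a stair with k boxes and let v : {0,…,k−1} → ℤ be its favorite condition. Let S = {a, a+1, …, b} be an interval of boxes with 1 ≤ a and b ≤ k−2, and suppose its two cuts have the same type: either steps w_{a−1} and w_b are both down steps (two horizontal cuts) or both right steps (two vertical cuts). Then Σ_{i∈S} v(i) = 0. (This is the Remark that θ_𝓕(𝓔) = 0 whenever 𝓔 is a connected subrepresentation of a toric G-constellation whose substair has two horizontal cuts or two vertical cuts.) -/

import Mathlib

/-- A step of a stair: a right step `+(1,0)` or a down step `+(0,-1)`. -/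
inductive Step
  | right
  | down
deriving DecidableEq, BEq

/-- Box `i` of a stair with `k` boxes and step word `w` is a generator. -/
def IsGenBox (k : ℕ) (w : ℕ → Step) (i : ℕ) : Prop :=
  (i = 0 ∨ w (i - 1) = Step.down) ∧ (i = k - 1 ∨ w i = Step.right)

/-- Box `i` of a stair with `k` boxes and step word `w` is an antigenerator. -/
def IsAntigenBox (k : ℕ) (w : ℕ → Step) (i : ℕ) : Prop :=
  (i = 0 ∨ w (i - 1) = Step.right) ∧ (i = k - 1 ∨ w i = Step.down)

instance (k : ℕ) (w : ℕ → Step) : DecidablePred (IsGenBox k w) := fun i => by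
  unfold IsGenBox; infer_instance

instance (k : ℕ) (w : ℕ → Step) : DecidablePred (IsAntigenBox k w) := fun i => by
  unfold IsAntigenBox; infer_instance

/-- The favorite condition of the stair with `k` boxes and step word `w`. -/
def fav (k : ℕ) (w : ℕ → Step) (i : ℕ) : ℤ :=
  if IsGenBox k w i then (if i = 0 ∨ i = k - 1 then -1 else -2)
  else if IsAntigenBox k w i then (if i = 0 ∨ i = k - 1 then 1 else 2)
  else 0

/-!
At an interior box `i` the favorite condition is `σ (w i) - σ (w (i - 1))`, where
`σ right = -1` and `σ down = 1`. Summed over an interval `{a, …, b}` of interior boxes this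
telescopes to `σ (w b) - σ (w (a - 1))`, which vanishes exactly when the two cuts have the
same type.
-/

def Step.sign : Step → ℤ
  | Step.right => -1
  | Step.down => 1

theorem fav_eq_sign_sub {k : ℕ} {w : ℕ → Step} {i : ℕ} (hi₀ : i ≠ 0) (hik : i + 2 ≤ k) :
    fav k w i = (w i).sign - (w (i - 1)).sign := by
  have hi_ne_last : i ≠ k - 1 := by omega
  cases hout : w i <;> cases hin : w (i - 1) <;>
    simp [fav, IsGenBox, IsAntigenBox, Step.sign, hi₀, hi_ne_last, hout, hin]

theorem sum_Icc_fav {k : ℕ} {w : ℕ → Step} {a b : ℕ} (ha : 1 ≤ a) (hab : a ≤ b)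
    (hbk : b + 2 ≤ k) :
    ∑ i ∈ Finset.Icc a b, fav k w i = (w b).sign - (w (a - 1)).sign := by
  have hterm : ∀ i ∈ Finset.Icc a b,
      fav k w i = (w (i + 1 - 1)).sign - (w (i - 1)).sign := by
    intro i hi
    rw [Finset.mem_Icc] at hi
    rw [Nat.add_sub_cancel, fav_eq_sign_sub (by omega) (by omega)]
  rw [Finset.sum_congr rfl hterm, Finset.sum_Icc_sub hab fun j => (w (j - 1)).sign,
    Nat.add_sub_cancel]

theorem stmt13_general (k : ℕ) (w : ℕ → Step) (a b : ℕ)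
    (ha : 1 ≤ a) (hab : a ≤ b) (hbk : b ≤ k - 2)
    (hcuts : (w (a - 1) = Step.down ∧ w b = Step.down) ∨
      (w (a - 1) = Step.right ∧ w b = Step.right)) :
    ∑ i ∈ Finset.Icc a b, fav k w i = 0 := by
  rw [sum_Icc_fav ha hab (by omega), sub_eq_zero]
  rcases hcuts with ⟨hleft, hright⟩ | ⟨hleft, hright⟩ <;> rw [hleft, hright]

/-- Let `S = {a, …, b}` be an interval of boxes of a stair with `k ≥ 2`
boxes, with `1 ≤ a` and `b ≤ k-2`, whose two cuts have the same type: steps `w_{a-1}` and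
`w_b` are both down steps (two horizontal cuts) or both right steps (two vertical cuts).
Then the favorite condition sums to `0` over `S`. -/
theorem stmt13 (k : ℕ) (hk : 2 ≤ k) (w : ℕ → Step) (a b : ℕ)
    (ha : 1 ≤ a) (hab : a ≤ b) (hbk : b ≤ k - 2)
    (hcuts : (w (a - 1) = Step.down ∧ w b = Step.down) ∨
      (w (a - 1) = Step.right ∧ w b = Step.right)) :
    ∑ i ∈ Finset.Icc a b, fav k w i = 0 :=
  stmt13_general k w a b ha hab hbk hcuts
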